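/- Suppose a real-valued assignment z on arcs satisfies: for every vertex v in a set S, the net inflow of z into v equals the total service demand absorbed at v, where the total service demand absorbed in S is strictly positive, no serviced arc enters S from outside, and z is bounded above on each arc by a constant times the number of deadheading traversals plus servicings of that arc. Then there exists at least one arc entering S from outside that is deadheaded at least once (has strictly positive deadheading count). -/
import Mathlib

lemma sum_fiber_aux {V A : Type} [Fintype A] [DecidableEq V]
    (S : Finset V) (f : A → V) (g : A → ℝ) :
    ∑ v ∈ S, ∑ a ∈ Finset.univ.filter (fun a : A => f a = v), g a =
      ∑ a : A, (if f a ∈ S then g a else 0) := by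
  have : ∀ v ∈ S, ∑ a ∈ Finset.univ.filter (fun a : A => f a = v), g a
      = ∑ a : A, (if f a = v then g a else 0) := by
    intro v _; rw [Finset.sum_filter]
  rw [Finset.sum_congr rfl this, Finset.sum_comm]
  refine Finset.sum_congr rfl fun a _ => ?_
  exact Finset.sum_ite_eq S (f a) (fun _ => g a)

/-- Generalized-flow connectivity argument: if the net inflow of `z` into each
vertex of `S` equals the service demand absorbed there, the total service
within `S` is strictly positive, no serviced arc enters `S` from outside,
`z` is nonnegative and bounded by `K·(d + s)` on each arc, then some arc
entering `S` from outside is deadheaded at least once. -/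
theorem deadhead_arc_into_S
    {V A : Type} [Fintype V] [Fintype A] [DecidableEq V]
    (tail head : A → V) (S : Finset V)
    (z : A → ℝ) (d s : A → ℕ) (K : ℝ)
    (hK : 0 < K)
    (hs01 : ∀ a : A, s a ≤ 1)
    (hz_nonneg : ∀ a : A, 0 ≤ z a)
    (hflow : ∀ v ∈ S,
      (∑ a ∈ Finset.univ.filter fun a : A => head a = v, z a) -
        (∑ a ∈ Finset.univ.filter fun a : A => tail a = v, z a) =
        ∑ a ∈ Finset.univ.filter fun a : A => head a = v, (s a : ℝ))
    (hpos : 0 < ∑ a ∈ Finset.univ.filter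
        (fun a : A => tail a ∈ S ∧ head a ∈ S), (s a : ℝ))
    (hnoservice : ∀ a : A, tail a ∉ S → head a ∈ S → s a = 0)
    (hbound : ∀ a : A, z a ≤ K * ((d a : ℝ) + (s a : ℝ))) :
    ∃ a : A, tail a ∉ S ∧ head a ∈ S ∧ 0 < d a := by
  by_contra hcon
  push_neg at hcon
  have hz0 : ∀ a : A, tail a ∉ S → head a ∈ S → z a = 0 := by
    intro a ht hh
    have hd : d a = 0 := Nat.le_antisymm (hcon a ht hh) (Nat.zero_le _)
    have hs : s a = 0 := hnoservice a ht hh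
    have hb := hbound a
    rw [hd, hs] at hb
    simp at hb
    linarith [hz_nonneg a]
  -- sum the flow equations over S
  have key : (∑ a : A, (if head a ∈ S then z a else 0)) -
      (∑ a : A, (if tail a ∈ S then z a else 0)) =
      ∑ a : A, (if head a ∈ S then (s a : ℝ) else 0) := by
    rw [← sum_fiber_aux S head z, ← sum_fiber_aux S tail z,
      ← sum_fiber_aux S head (fun a => (s a : ℝ)), ← Finset.sum_sub_distrib]
    exact Finset.sum_congr rfl hflow
  have hle : (∑ a : A, (if head a ∈ S then z a else 0)) -
      (∑ a : A, (if tail a ∈ S then z a else 0)) ≤ 0 := by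
    rw [← Finset.sum_sub_distrib]
    apply Finset.sum_nonpos
    intro a _
    by_cases hh : head a ∈ S <;> by_cases ht : tail a ∈ S <;>
      simp [hh, ht]
    · exact le_of_eq (hz0 a ht hh)
    · exact hz_nonneg a
  have hge : 0 < ∑ a : A, (if head a ∈ S then (s a : ℝ) else 0) := by
    have h1 : (∑ a ∈ Finset.univ.filter
        (fun a : A => tail a ∈ S ∧ head a ∈ S), (s a : ℝ)) ≤
        ∑ a : A, (if head a ∈ S then (s a : ℝ) else 0) := by
      rw [Finset.sum_filter]
      apply Finset.sum_le_sum
      intro a _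
      by_cases hh : head a ∈ S <;> by_cases ht : tail a ∈ S <;>
        simp [hh, ht]
    linarith
  linarith [key]
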